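/- (Pareto optimality factorizes over the two subgames.) Let u be any function assigning a real number u_t(a1, a2) to each arrival pair t ∈ T and each pair of actions (a1, a2) (no order assumptions on u are needed). A strategy profile s is Pareto optimal over T if and only if s is Pareto optimal over T1 and s is Pareto optimal over T2. -/

import Mathlib

/-! In every arrival pair the two arrival times are adjacent integers, so exactly one of them has
the parity of `kmin`. Hence `T` is the disjoint union of `T1` and `T2`, and in `T1` player 1
only ever arrives at times of parity `kmin` and player 2 at the other times, while in `T2` it is
the other way round. The two subgames thus read disjoint parts of a profile, so a profile can be
improved on one subgame without changing its payoff on the other; since expected utility is the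
total payoff up to a positive factor, the total over `T` is maximal iff both partial totals are. -/

/-- The two actions: `c` (canteen) and `o` (office). -/
inductive Act : Type
  | c : Act
  | o : Act
deriving DecidableEq

open Act

/-- The set of arrival pairs
`T = {(k, k+1) : kmin ≤ k ≤ kmax - 1} ∪ {(k, k-1) : kmin + 1 ≤ k ≤ kmax}`. -/
noncomputable def T (kmin kmax : ℤ) : Finset (ℤ × ℤ) :=
  ((Finset.Icc kmin (kmax - 1)).image (fun k => (k, k + 1))) ∪
  ((Finset.Icc (kmin + 1) kmax).image (fun k => (k, k - 1)))

/-- Subgame `T1 = {(t1,t2) ∈ T : t1 ≡ kmin (mod 2)}`. -/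
noncomputable def T1 (kmin kmax : ℤ) : Finset (ℤ × ℤ) :=
  (T kmin kmax).filter (fun t => t.1 % 2 = kmin % 2)

/-- Subgame `T2 = {(t1,t2) ∈ T : t2 ≡ kmin (mod 2)}`. -/
noncomputable def T2 (kmin kmax : ℤ) : Finset (ℤ × ℤ) :=
  (T kmin kmax).filter (fun t => t.2 % 2 = kmin % 2)

/-- The expected utility of profile `s` over a set `S` of arrival pairs:
`EU_S(s) = (1/|S|) · Σ_{(t1,t2) ∈ S} u_{(t1,t2)}(s_1(t1), s_2(t2))`. -/
noncomputable def EU (u : ℤ × ℤ → Act → Act → ℝ) (s : (ℤ → Act) × (ℤ → Act))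
    (S : Finset (ℤ × ℤ)) : ℝ :=
  (∑ t ∈ S, u t (s.1 t.1) (s.2 t.2)) / S.card

/-- `s` is Pareto optimal over `S` if no profile `s'` has `EU_S(s') > EU_S(s)`. -/
def ParetoOptimal (u : ℤ × ℤ → Act → Act → ℝ) (S : Finset (ℤ × ℤ))
    (s : (ℤ → Act) × (ℤ → Act)) : Prop :=
  ¬ ∃ s' : (ℤ → Act) × (ℤ → Act), EU u s' S > EU u s S

/-- `u` satisfies conditions (U1) and (U2) on the arrival pairs of `T`. -/
def SatisfiesU1U2 (kmin kmax N : ℤ) (u : ℤ × ℤ → Act → Act → ℝ) : Prop :=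
  ∀ t ∈ T kmin kmax,
    (t.1 < N ∧ t.2 < N →
      u t c c > u t o o ∧ u t o o > u t c o ∧ u t c o = u t o c) ∧
    (N ≤ t.1 ∨ N ≤ t.2 →
      u t o o > u t c o ∧ u t c o = u t o c ∧ u t o c = u t c c)

/-- `u` is uniform with values `A > B > C` (the order is assumed separately). -/
def Uniform (kmin kmax N : ℤ) (u : ℤ × ℤ → Act → Act → ℝ) (A B C : ℝ) : Prop :=
  ∀ t ∈ T kmin kmax,
    (t.1 < N ∧ t.2 < N →
      u t c c = A ∧ u t o o = B ∧ u t c o = C ∧ u t o c = C) ∧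
    (N ≤ t.1 ∨ N ≤ t.2 →
      u t o o = B ∧ u t c c = C ∧ u t c o = C ∧ u t o c = C)

/-- The cut-off strategy with cut-off `m`: canteen iff arriving strictly before `m`. -/
def cutoff (m : ℤ) : ℤ → Act := fun k => if k < m then c else o

/-- The all-office strategy. -/
def allOffice : ℤ → Act := fun _ => o

noncomputable def totalUtility (u : ℤ × ℤ → Act → Act → ℝ) (S : Finset (ℤ × ℤ))
    (s : (ℤ → Act) × (ℤ → Act)) : ℝ :=
  ∑ t ∈ S, u t (s.1 t.1) (s.2 t.2)

lemma paretoOptimal_iff_forall_totalUtility_le {u : ℤ × ℤ → Act → Act → ℝ}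
    {S : Finset (ℤ × ℤ)} {s : (ℤ → Act) × (ℤ → Act)} :
    ParetoOptimal u S s ↔ ∀ s', totalUtility u S s' ≤ totalUtility u S s := by
  unfold ParetoOptimal EU totalUtility
  simp only [gt_iff_lt, not_exists, not_lt]
  rcases S.eq_empty_or_nonempty with rfl | hS
  · simp
  · have hcard : (0 : ℝ) < S.card := by exact_mod_cast hS.card_pos
    simp_rw [div_le_div_iff_of_pos_right hcard]

def splice (P : ℤ → Prop) [DecidablePred P] (s s' : (ℤ → Act) × (ℤ → Act)) :
    (ℤ → Act) × (ℤ → Act) :=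
  (fun k => if P k then s'.1 k else s.1 k, fun k => if P k then s.2 k else s'.2 k)

section Alternating

variable (u : ℤ × ℤ → Act → Act → ℝ) {P : ℤ → Prop} [DecidablePred P] {S : Finset (ℤ × ℤ)}

lemma filter_snd_eq_filter_not_fst (hS : ∀ t ∈ S, P t.1 ↔ ¬ P t.2) :
    S.filter (fun t => P t.2) = S.filter (fun t => ¬ P t.1) :=
  Finset.filter_congr fun t ht => by rw [hS t ht, not_not]

lemma totalUtility_eq_add_filter (hS : ∀ t ∈ S, P t.1 ↔ ¬ P t.2) (s : (ℤ → Act) × (ℤ → Act)) :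
    totalUtility u S s =
      totalUtility u (S.filter (fun t => P t.1)) s +
        totalUtility u (S.filter (fun t => P t.2)) s := by
  rw [filter_snd_eq_filter_not_fst hS, totalUtility, totalUtility, totalUtility,
    Finset.sum_filter_add_sum_filter_not]

lemma totalUtility_splice (hS : ∀ t ∈ S, P t.1 ↔ ¬ P t.2) (s s' : (ℤ → Act) × (ℤ → Act)) :
    totalUtility u S (splice P s s') =
      totalUtility u (S.filter (fun t => P t.1)) s' +
        totalUtility u (S.filter (fun t => P t.2)) s := by
  rw [totalUtility_eq_add_filter u hS]
  congr 1 <;> refine Finset.sum_congr rfl fun t ht => ?_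
  · obtain ⟨htS, h1⟩ := Finset.mem_filter.mp ht
    have h2 : ¬ P t.2 := (hS t htS).mp h1
    simp [splice, h1, h2]
  · obtain ⟨htS, h2⟩ := Finset.mem_filter.mp ht
    have h1 : ¬ P t.1 := fun h1 => (hS t htS).mp h1 h2
    simp [splice, h1, h2]

theorem paretoOptimal_iff_of_alternating (hS : ∀ t ∈ S, P t.1 ↔ ¬ P t.2)
    (s : (ℤ → Act) × (ℤ → Act)) :
    ParetoOptimal u S s ↔
      ParetoOptimal u (S.filter (fun t => P t.1)) s ∧
        ParetoOptimal u (S.filter (fun t => P t.2)) s := by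
  simp only [paretoOptimal_iff_forall_totalUtility_le, totalUtility_eq_add_filter u hS s]
  constructor
  · intro hopt
    refine ⟨fun s' => ?_, fun s' => ?_⟩
    · have h := hopt (splice P s s')
      rw [totalUtility_splice u hS] at h
      linarith
    · have h := hopt (splice P s' s)
      rw [totalUtility_splice u hS] at h
      linarith
  · rintro ⟨hopt₁, hopt₂⟩ s'
    rw [totalUtility_eq_add_filter u hS]
    exact add_le_add (hopt₁ s') (hopt₂ s')

end Alternating

lemma mem_T_parity_alternates {kmin kmax : ℤ} {t : ℤ × ℤ} (ht : t ∈ T kmin kmax) :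
    t.1 % 2 = kmin % 2 ↔ ¬ t.2 % 2 = kmin % 2 := by
  simp only [T, Finset.mem_union, Finset.mem_image] at ht
  rcases ht with ⟨k, _, rfl⟩ | ⟨k, _, rfl⟩ <;> dsimp only <;> omega

theorem stmt_6_general (kmin kmax : ℤ)
    (u : ℤ × ℤ → Act → Act → ℝ) (s : (ℤ → Act) × (ℤ → Act)) :
    ParetoOptimal u (T kmin kmax) s ↔
    (ParetoOptimal u (T1 kmin kmax) s ∧ ParetoOptimal u (T2 kmin kmax) s) :=
  paretoOptimal_iff_of_alternating (P := fun k => k % 2 = kmin % 2) u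
    (fun _ => mem_T_parity_alternates) s

/-- Pareto optimality factorizes over the two subgames. -/
theorem stmt_6 (kmin kmax N : ℤ) (h1 : kmin < N) (h2 : N ≤ kmax)
    (u : ℤ × ℤ → Act → Act → ℝ) (s : (ℤ → Act) × (ℤ → Act)) :
    ParetoOptimal u (T kmin kmax) s ↔
    (ParetoOptimal u (T1 kmin kmax) s ∧ ParetoOptimal u (T2 kmin kmax) s) :=
  stmt_6_general kmin kmax u s
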